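/- arXiv:gr-qc/0210071 — 3 statements merged into one kernel-verified Lean document; each statement's English description precedes it below -/
import Mathlib

section
/- Setting λ_{lji} = -(1/√2)[(Lγ)_{lji} + (Mγ)_{[l} δ_{j]i}] for a smooth symmetric matrix field γ, one has (Pγ)_{ij} = -√2 (L*λ)_{ij} + (1/2) ∂^l (Mγ)_l δ_{ij}, where (L*w)_{ij} = -∂^l w_{l(ij)}. -/
/-- Partial derivative `∂ᵢ f` of a scalar field on ℝ³ (coordinates `Fin 3 → ℝ`). -/
noncomputable def pd (i : Fin 3) (f : (Fin 3 → ℝ) → ℝ) (x : Fin 3 → ℝ) : ℝ :=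
  fderiv ℝ f x (Pi.single i 1)

/-- Kronecker delta. -/
def kd (i j : Fin 3) : ℝ := if i = j then 1 else 0

/-- `(Lu)_{lji} = ∂_{[l} u_{j]i}`. -/
noncomputable def Lop (u : (Fin 3 → ℝ) → Fin 3 → Fin 3 → ℝ)
    (l j i : Fin 3) (x : Fin 3 → ℝ) : ℝ :=
  (pd l (fun y => u y j i) x - pd j (fun y => u y l i) x) / 2

/-- `(L*w)_{ij} = -∂^l w_{l(ij)}`. -/
noncomputable def Lstar (w : (Fin 3 → ℝ) → Fin 3 → Fin 3 → Fin 3 → ℝ)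
    (i j : Fin 3) (x : Fin 3 → ℝ) : ℝ :=
  -∑ l, pd l (fun y => (w y l i j + w y l j i) / 2) x

/-- `(Mu)_i = ∂^l u_{il} - ∂_i u^l_l`. -/
noncomputable def Mop (u : (Fin 3 → ℝ) → Fin 3 → Fin 3 → ℝ)
    (i : Fin 3) (x : Fin 3 → ℝ) : ℝ :=
  (∑ l, pd l (fun y => u y i l) x) - pd i (fun y => ∑ l, u y l l) x

/-- Linearized Ricci operator `P`. -/
noncomputable def Pop (u : (Fin 3 → ℝ) → Fin 3 → Fin 3 → ℝ)
    (i j : Fin 3) (x : Fin 3 → ℝ) : ℝ :=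
  (1 / 2) * (pd i (fun y => ∑ l, pd l (fun z => u z l j) y) x
    + pd j (fun y => ∑ l, pd l (fun z => u z l i) y) x
    - (∑ l, pd l (fun y => pd l (fun z => u z i j) y) x)
    - pd i (fun y => pd j (fun z => ∑ l, u z l l) y) x)

/- helper lemmas -/

lemma pd_smooth {f : (Fin 3 → ℝ) → ℝ} (hf : ContDiff ℝ (⊤ : ℕ∞) f) (i : Fin 3) :
    ContDiff ℝ (⊤ : ℕ∞) (pd i f) := by
  have h := hf.fderiv_right (m := (⊤ : ℕ∞)) (by simp)
  exact (ContinuousLinearMap.apply ℝ ℝ (Pi.single i (1:ℝ))).contDiff.comp h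

lemma pd_add {f g : (Fin 3 → ℝ) → ℝ} (hf : Differentiable ℝ f) (hg : Differentiable ℝ g)
    (i : Fin 3) (x : Fin 3 → ℝ) :
    pd i (fun y => f y + g y) x = pd i f x + pd i g x := by
  simp [pd, fderiv_fun_add (hf x) (hg x)]

lemma pd_sub {f g : (Fin 3 → ℝ) → ℝ} (hf : Differentiable ℝ f) (hg : Differentiable ℝ g)
    (i : Fin 3) (x : Fin 3 → ℝ) :
    pd i (fun y => f y - g y) x = pd i f x - pd i g x := by
  simp [pd, fderiv_fun_sub (hf x) (hg x)]

lemma pd_const_mul {f : (Fin 3 → ℝ) → ℝ} (hf : Differentiable ℝ f) (c : ℝ)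
    (i : Fin 3) (x : Fin 3 → ℝ) :
    pd i (fun y => c * f y) x = c * pd i f x := by
  simp [pd, fderiv_const_mul (hf x) c]

lemma pd_mul_const {f : (Fin 3 → ℝ) → ℝ} (hf : Differentiable ℝ f) (c : ℝ)
    (i : Fin 3) (x : Fin 3 → ℝ) :
    pd i (fun y => f y * c) x = pd i f x * c := by
  rw [mul_comm, ← pd_const_mul hf c i x]; simp only [mul_comm]

lemma pd_div_const {f : (Fin 3 → ℝ) → ℝ} (hf : Differentiable ℝ f) (c : ℝ)
    (i : Fin 3) (x : Fin 3 → ℝ) :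
    pd i (fun y => f y / c) x = pd i f x / c := by
  simp only [div_eq_mul_inv]; exact pd_mul_const hf _ i x

lemma pd_sum {f : Fin 3 → (Fin 3 → ℝ) → ℝ} (hf : ∀ l, Differentiable ℝ (f l))
    (i : Fin 3) (x : Fin 3 → ℝ) :
    pd i (fun y => ∑ l, f l y) x = ∑ l, pd i (f l) x := by
  simp only [pd]
  rw [fderiv_fun_sum (fun l _ => (hf l x))]
  simp

lemma pd_comm {f : (Fin 3 → ℝ) → ℝ} (hf : ContDiff ℝ (⊤ : ℕ∞) f) (i j : Fin 3) (x : Fin 3 → ℝ) :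
    pd i (fun y => pd j f y) x = pd j (fun y => pd i f y) x := by
  have hsym : IsSymmSndFDerivAt ℝ f x :=
    (hf.contDiffAt).isSymmSndFDerivAt (by rw [minSmoothness_of_isRCLikeNormedField]; exact WithTop.coe_le_coe.2 le_top)
  have hd : Differentiable ℝ (fderiv ℝ f) :=
    (hf.fderiv_right (m := (⊤ : ℕ∞)) (by simp)).differentiable (by simp)
  have key : ∀ v w : Fin 3 → ℝ,
      fderiv ℝ (fun y => fderiv ℝ f y v) x w = fderiv ℝ (fderiv ℝ f) x w v := by
    intro v w
    have : (fun y => fderiv ℝ f y v) = (ContinuousLinearMap.apply ℝ ℝ v) ∘ fderiv ℝ f := rfl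
    rw [this, fderiv_comp x (ContinuousLinearMap.apply ℝ ℝ v).differentiableAt (hd x)]
    simp
  simp only [pd, key]
  exact hsym.eq _ _

lemma kd_symm (a b : Fin 3) : kd a b = kd b a := by
  simp [kd, eq_comm]

lemma kd_collapse (F : Fin 3 → ℝ) (j : Fin 3) : ∑ l, kd l j * F l = F j := by
  simp [kd, ite_mul]

lemma diff_div_const {f : (Fin 3 → ℝ) → ℝ} (hf : Differentiable ℝ f) (c : ℝ) :
    Differentiable ℝ fun y => f y / c := by
  simpa [div_eq_mul_inv] using hf.mul_const c⁻¹

lemma pd_comb {L1 L2 M1 M2 M3 : (Fin 3 → ℝ) → ℝ} (h1 : Differentiable ℝ L1)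
    (h2 : Differentiable ℝ L2) (h3 : Differentiable ℝ M1) (h4 : Differentiable ℝ M2)
    (h5 : Differentiable ℝ M3) (c k1 k2 k3 k4 : ℝ) (i : Fin 3) (x : Fin 3 → ℝ) :
    pd i (fun y => c * ((L1 y + L2 y + ((M1 y * k1 - M2 y * k2) / 2
        + (M1 y * k3 - M3 y * k4) / 2)) / 2)) x
      = c * ((pd i L1 x + pd i L2 x + ((pd i M1 x * k1 - pd i M2 x * k2) / 2
        + (pd i M1 x * k3 - pd i M3 x * k4) / 2)) / 2) := by
  have dB1 : Differentiable ℝ (fun y => M1 y * k1 - M2 y * k2) :=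
    (h3.mul_const k1).sub (h4.mul_const k2)
  have dB2 : Differentiable ℝ (fun y => M1 y * k3 - M3 y * k4) :=
    (h3.mul_const k3).sub (h5.mul_const k4)
  have dB : Differentiable ℝ (fun y => (M1 y * k1 - M2 y * k2) / 2
      + (M1 y * k3 - M3 y * k4) / 2) :=
    (diff_div_const dB1 2).add (diff_div_const dB2 2)
  have dA : Differentiable ℝ (fun y => L1 y + L2 y) := h1.add h2
  have dAB : Differentiable ℝ (fun y => L1 y + L2 y + ((M1 y * k1 - M2 y * k2) / 2
      + (M1 y * k3 - M3 y * k4) / 2)) := dA.add dB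
  rw [pd_const_mul (diff_div_const dAB 2) c, pd_div_const dAB 2, pd_add dA dB, pd_add h1 h2,
    pd_add (diff_div_const dB1 2) (diff_div_const dB2 2), pd_div_const dB1 2, pd_div_const dB2 2,
    pd_sub (h3.mul_const k1) (h4.mul_const k2), pd_sub (h3.mul_const k3) (h5.mul_const k4),
    pd_mul_const h3 k1, pd_mul_const h4 k2, pd_mul_const h3 k3, pd_mul_const h5 k4]

theorem P_eq_Lstar_lambda (γ : (Fin 3 → ℝ) → Fin 3 → Fin 3 → ℝ)
    (hγ : ∀ i j, ContDiff ℝ (⊤ : ℕ∞) fun x => γ x i j)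
    (hsym : ∀ x i j, γ x i j = γ x j i)
    (lam : (Fin 3 → ℝ) → Fin 3 → Fin 3 → Fin 3 → ℝ)
    (hlam : ∀ x l j i, lam x l j i =
      -(1 / Real.sqrt 2) * (Lop γ l j i x + (Mop γ l x * kd j i - Mop γ j x * kd l i) / 2)) :
    ∀ (x : Fin 3 → ℝ) (i j : Fin 3),
      Pop γ i j x =
        -Real.sqrt 2 * Lstar lam i j x
          + (1 / 2) * (∑ l, pd l (fun y => Mop γ l y) x) * kd i j := by
  intro x i j
  have hg : ∀ a b, ContDiff ℝ (⊤ : ℕ∞) fun z => γ z a b := hγ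
  have hdg : ∀ a b, Differentiable ℝ fun z => γ z a b :=
    fun a b => (hg a b).differentiable (by simp)
  have hpg : ∀ c a b, ContDiff ℝ (⊤ : ℕ∞) fun y => pd c (fun z => γ z a b) y :=
    fun c a b => pd_smooth (hg a b) c
  have hdpg : ∀ c a b, Differentiable ℝ fun y => pd c (fun z => γ z a b) y :=
    fun c a b => (hpg c a b).differentiable (by simp)
  have htr : ContDiff ℝ (⊤ : ℕ∞) fun z => ∑ m, γ z m m := ContDiff.sum fun m _ => hg m m
  have hL : ∀ l a b, ContDiff ℝ (⊤ : ℕ∞) fun y => Lop γ l a b y := by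
    intro l a b
    simp only [Lop]
    exact ((hpg l a b).sub (hpg a l b)).div_const 2
  have hdL : ∀ l a b, Differentiable ℝ fun y => Lop γ l a b y :=
    fun l a b => (hL l a b).differentiable (by simp)
  have hM : ∀ a, ContDiff ℝ (⊤ : ℕ∞) fun y => Mop γ a y := by
    intro a
    simp only [Mop]
    exact (ContDiff.sum fun m _ => hpg m a m).sub (pd_smooth htr a)
  have hdM : ∀ a, Differentiable ℝ fun y => Mop γ a y :=
    fun a => (hM a).differentiable (by simp)
  -- derivative of Lop
  have hpdL : ∀ c l a b, pd c (fun y => Lop γ l a b y) x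
      = (pd c (fun y => pd l (fun z => γ z a b) y) x
        - pd c (fun y => pd a (fun z => γ z l b) y) x) / 2 := by
    intro c l a b
    simp only [Lop]
    rw [pd_div_const (f := fun y => pd l (fun z => γ z a b) y - pd a (fun z => γ z l b) y)
        ((hdpg l a b).sub (hdpg a l b)) 2 c x,
      pd_sub (hdpg l a b) (hdpg a l b)]
  -- derivative of Mop
  have hpdM : ∀ a c, pd c (fun y => Mop γ a y) x
      = (∑ m, pd c (fun y => pd m (fun z => γ z a m) y) x)
        - ∑ m, pd c (fun y => pd a (fun z => γ z m m) y) x := by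
    intro a c
    simp only [Mop]
    have hinner : pd a (fun z => ∑ m, γ z m m)
        = fun y => ∑ m, pd a (fun z => γ z m m) y :=
      funext fun y => pd_sum (fun m => hdg m m) a y
    rw [pd_sub (Differentiable.fun_sum fun m _ => hdpg m a m)
        ((pd_smooth htr a).differentiable (by simp)),
      pd_sum (fun m => hdpg m a m) c x]
    congr 1
    rw [hinner, pd_sum (fun m => hdpg a m m) c x]
  -- rewrite the lambda integrand
  have hfun : ∀ l : Fin 3, (fun y => (lam y l i j + lam y l j i) / 2)
      = fun y => -(1 / Real.sqrt 2) * ((Lop γ l i j y + Lop γ l j i y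
        + ((Mop γ l y * kd i j - Mop γ i y * kd l j) / 2
          + (Mop γ l y * kd j i - Mop γ j y * kd l i) / 2)) / 2) := by
    intro l
    funext y
    rw [hlam y l i j, hlam y l j i]
    ring
  have hE : ∀ l : Fin 3, pd l (fun y => (lam y l i j + lam y l j i) / 2) x
      = -(1 / Real.sqrt 2) * ((pd l (fun y => Lop γ l i j y) x
          + pd l (fun y => Lop γ l j i y) x
        + ((pd l (fun y => Mop γ l y) x * kd i j
            - pd l (fun y => Mop γ i y) x * kd l j) / 2
          + (pd l (fun y => Mop γ l y) x * kd j i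
            - pd l (fun y => Mop γ j y) x * kd l i) / 2)) / 2) := by
    intro l
    rw [hfun l]
    exact pd_comb (hdL l i j) (hdL l j i) (hdM l) (hdM i) (hdM j)
      (-(1 / Real.sqrt 2)) (kd i j) (kd l j) (kd j i) (kd l i) l x
  -- the W-form of -√2 * Lstar
  have h2 : Real.sqrt 2 ≠ 0 := ne_of_gt (Real.sqrt_pos.2 (by norm_num))
  have e3 : -Real.sqrt 2 * Lstar lam i j x
      = -∑ l, ((pd l (fun y => Lop γ l i j y) x + pd l (fun y => Lop γ l j i y) x
        + ((pd l (fun y => Mop γ l y) x * kd i j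
            - pd l (fun y => Mop γ i y) x * kd l j) / 2
          + (pd l (fun y => Mop γ l y) x * kd j i
            - pd l (fun y => Mop γ j y) x * kd l i) / 2)) / 2) := by
    simp only [Lstar, hE]
    rw [← Finset.mul_sum]
    field_simp
    congr 1
    exact Finset.sum_congr rfl fun l _ => by ring
  -- expand Pop
  have hinner4 : (fun y => pd j (fun z => ∑ l, γ z l l) y)
      = fun y => ∑ l, pd j (fun z => γ z l l) y :=
    funext fun y => pd_sum (fun l => hdg l l) j y
  have e1 : Pop γ i j x = (1 / 2) *
      ((∑ l, pd i (fun y => pd l (fun z => γ z l j) y) x)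
        + (∑ l, pd j (fun y => pd l (fun z => γ z l i) y) x)
        - (∑ l, pd l (fun y => pd l (fun z => γ z i j) y) x)
        - ∑ l, pd i (fun y => pd j (fun z => γ z l l) y) x) := by
    simp only [Pop]
    rw [pd_sum (fun l => hdpg l l j) i x, pd_sum (fun l => hdpg l l i) j x,
      show (fun y => pd j (fun z => ∑ l, γ z l l) y) = _ from hinner4,
      pd_sum (fun l => hdpg j l l) i x]
  -- normalize the W sum
  have e4 : ∑ l, ((pd l (fun y => Lop γ l i j y) x + pd l (fun y => Lop γ l j i y) x
        + ((pd l (fun y => Mop γ l y) x * kd i j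
            - pd l (fun y => Mop γ i y) x * kd l j) / 2
          + (pd l (fun y => Mop γ l y) x * kd j i
            - pd l (fun y => Mop γ j y) x * kd l i) / 2)) / 2)
      = ∑ l, ((1 / 4) * pd l (fun y => pd l (fun z => γ z i j) y) x
        + (-(1 / 4)) * pd l (fun y => pd i (fun z => γ z l j) y) x
        + (1 / 4) * pd l (fun y => pd l (fun z => γ z j i) y) x
        + (-(1 / 4)) * pd l (fun y => pd j (fun z => γ z l i) y) x
        + (kd i j / 2) * pd l (fun y => Mop γ l y) x
        + (-(1 / 4)) * (kd l j * pd l (fun y => Mop γ i y) x)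
        + (-(1 / 4)) * (kd l i * pd l (fun y => Mop γ j y) x)) := by
    refine Finset.sum_congr rfl fun l _ => ?_
    rw [hpdL l l i j, hpdL l l j i, kd_symm j i]
    ring
  rw [e1, e3, e4]
  rw [Finset.sum_add_distrib, Finset.sum_add_distrib, Finset.sum_add_distrib,
    Finset.sum_add_distrib, Finset.sum_add_distrib, Finset.sum_add_distrib,
    ← Finset.mul_sum, ← Finset.mul_sum, ← Finset.mul_sum, ← Finset.mul_sum,
    ← Finset.mul_sum, ← Finset.mul_sum, ← Finset.mul_sum]
  rw [kd_collapse (fun l => pd l (fun y => Mop γ i y) x) j,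
    kd_collapse (fun l => pd l (fun y => Mop γ j y) x) i]
  -- index-symmetry rewrites
  have eS5 : ∑ l, pd l (fun y => pd i (fun z => γ z l j) y) x
      = ∑ l, pd i (fun y => pd l (fun z => γ z l j) y) x :=
    Finset.sum_congr rfl fun l _ => pd_comm (hg l j) l i x
  have eS7 : ∑ l, pd l (fun y => pd j (fun z => γ z l i) y) x
      = ∑ l, pd j (fun y => pd l (fun z => γ z l i) y) x :=
    Finset.sum_congr rfl fun l _ => pd_comm (hg l i) l j x
  have hgs : ∀ a b, (fun z => γ z a b) = fun z => γ z b a :=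
    fun a b => funext fun z => hsym z a b
  have eS6 : ∑ l, pd l (fun y => pd l (fun z => γ z j i) y) x
      = ∑ l, pd l (fun y => pd l (fun z => γ z i j) y) x := by
    rw [hgs j i]
  have eQ1 : pd j (fun y => Mop γ i y) x
      = (∑ l, pd j (fun y => pd l (fun z => γ z l i) y) x)
        - ∑ l, pd i (fun y => pd j (fun z => γ z l l) y) x := by
    rw [hpdM i j]
    congr 1
    · refine Finset.sum_congr rfl fun m _ => ?_
      rw [hgs i m]
    · exact Finset.sum_congr rfl fun m _ => pd_comm (hg m m) j i x
  have eQ2 : pd i (fun y => Mop γ j y) x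
      = (∑ l, pd i (fun y => pd l (fun z => γ z l j) y) x)
        - ∑ l, pd i (fun y => pd j (fun z => γ z l l) y) x := by
    rw [hpdM j i]
    congr 1
    refine Finset.sum_congr rfl fun m _ => ?_
    rw [hgs j m]
  rw [eS5, eS7, eS6, eQ1, eQ2]
  ring
end

section
/- Plane wave eigenvalue problem, speed-1 modes: let n, m, l be an orthonormal frame in ℝ³. Then for s = ±1, the pair κ̃_{ij} = l_i l_j - m_i m_j, λ̃_{lji} = ∓√2 (n_{[l} l_{j]} l_i - n_{[l} m_{j]} m_i) satisfies s κ̃_{ij} = -√2 n^p λ̃_{p(ij)} and s λ̃_{lji} = -√2 n_{[l} κ̃_{j]i}. -/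
theorem plane_wave_speed_one_mode (n m lv : Fin 3 → ℝ)
    (hn : ∑ i, n i * n i = 1) (hm : ∑ i, m i * m i = 1) (hl : ∑ i, lv i * lv i = 1)
    (hnm : ∑ i, n i * m i = 0) (hnl : ∑ i, n i * lv i = 0) (hml : ∑ i, m i * lv i = 0) :
    ∀ s : ℝ, (s = 1 ∨ s = -1) →
      let κ : Fin 3 → Fin 3 → ℝ := fun i j => lv i * lv j - m i * m j
      let lam : Fin 3 → Fin 3 → Fin 3 → ℝ := fun l j i =>
        -s * Real.sqrt 2 *
          (((n l * lv j - n j * lv l) / 2) * lv i - ((n l * m j - n j * m l) / 2) * m i)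
      (∀ i j, s * κ i j = -Real.sqrt 2 * ∑ p, n p * ((lam p i j + lam p j i) / 2)) ∧
      (∀ l j i, s * lam l j i = -Real.sqrt 2 * ((n l * κ j i - n j * κ l i) / 2)) := by
  intro s hs κ lam
  have hs2 : s * s = 1 := by rcases hs with h | h <;> rw [h] <;> norm_num
  set r := Real.sqrt 2 with hrdef
  have hr : r * r = 2 := Real.mul_self_sqrt (by norm_num)
  simp only [Fin.sum_univ_three] at hn hnm hnl ⊢
  constructor
  · intro i j
    simp only [κ, lam]
    linear_combination (-s * (lv i * lv j - m i * m j) / 2 * (r * r)) * hn +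
      (-s * (lv i * lv j - m i * m j) / 2) * hr +
      (s * r * r / 4 * (n i * lv j + n j * lv i)) * hnl +
      (-s * r * r / 4 * (n i * m j + n j * m i)) * hnm
  · intro l j i
    simp only [κ, lam]
    linear_combination (-r * (((n l * lv j - n j * lv l) / 2) * lv i -
      ((n l * m j - n j * m l) / 2) * m i)) * hs2
end

section
/- Plane wave eigenvalue problem, speed-1/√2 modes: let n, m, l be an orthonormal frame in ℝ³. Then for s = ±1/√2, the pair κ̃_{ij} = n_{(i} l_{j)}, λ̃_{lji} = ∓ n_{[l} l_{j]} n_i satisfies s κ̃_{ij} = -√2 n^p λ̃_{p(ij)} and s λ̃_{lji} = -√2 n_{[l} κ̃_{j]i}. -/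
theorem plane_wave_speed_inv_sqrt_two_mode (n m lv : Fin 3 → ℝ)
    (hn : ∑ i, n i * n i = 1) (hm : ∑ i, m i * m i = 1) (hl : ∑ i, lv i * lv i = 1)
    (hnm : ∑ i, n i * m i = 0) (hnl : ∑ i, n i * lv i = 0) (hml : ∑ i, m i * lv i = 0) :
    ∀ s : ℝ, (s = 1 / Real.sqrt 2 ∨ s = -(1 / Real.sqrt 2)) →
      let κ : Fin 3 → Fin 3 → ℝ := fun i j => (n i * lv j + n j * lv i) / 2
      let lam : Fin 3 → Fin 3 → Fin 3 → ℝ := fun l j i =>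
        -(Real.sqrt 2 * s) * ((n l * lv j - n j * lv l) / 2) * n i
      (∀ i j, s * κ i j = -Real.sqrt 2 * ∑ p, n p * ((lam p i j + lam p j i) / 2)) ∧
      (∀ l j i, s * lam l j i = -Real.sqrt 2 * ((n l * κ j i - n j * κ l i) / 2)) := by
  intro s hs κ lam
  have h2 : Real.sqrt 2 * Real.sqrt 2 = 2 := Real.mul_self_sqrt (by norm_num)
  have hs2 : s * s * 2 = 1 := by
    have hpos : Real.sqrt 2 ≠ 0 := by positivity
    rcases hs with h | h <;> subst h <;> field_simp <;> nlinarith [h2]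
  constructor
  · intro i j
    simp only [κ, lam, Fin.sum_univ_three] at *
    linear_combination
      (-(s/4) * (((n 0 * n 0 + n 1 * n 1 + n 2 * n 2) * lv i
          - n i * (n 0 * lv 0 + n 1 * lv 1 + n 2 * lv 2)) * n j
        + ((n 0 * n 0 + n 1 * n 1 + n 2 * n 2) * lv j
          - n j * (n 0 * lv 0 + n 1 * lv 1 + n 2 * lv 2)) * n i)) * h2
      + (-(s/2) * (lv i * n j + lv j * n i)) * hn
      + (s * n i * n j) * hnl
  · intro l j i
    simp only [κ, lam]
    linear_combination (-(Real.sqrt 2)/4 * n i * (n l * lv j - n j * lv l)) * hs2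
end
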